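/- arXiv:1711.03132 — 4 statements merged into one kernel-verified Lean document; each statement's English description precedes it below -/
import Mathlib

section
/- Every group homomorphism from a Polish topological group to the integers ℤ (with the discrete topology) is continuous. -/
/-!
If `φ` is discontinuous, its kernel is not a neighbourhood of `1`, so there are elements `h n`
arbitrarily close to `1` with `φ (h n) ≠ 0`. Choosing them close enough, completeness yields
infinite nested products `y n = h n * y (n + 1) ^ (|φ (h n)| + 2)`. Then
`φ (y n) = t + (|t| + 2) * φ (y (n + 1))` with `t = φ (h n) ≠ 0`, which forces
`|φ (y (n + 1))| < |φ (y n)|` for every `n`: an infinite descent in `ℕ`.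
-/

open Filter Topology TopologicalSpace

section InfiniteComposition

variable {α X : Type*} [TopologicalSpace X] {T : α → X → X}

theorem continuous_foldr (hT : ∀ a, Continuous (T a)) (l : List α) :
    Continuous fun x => l.foldr T x := by
  induction l with
  | nil => exact continuous_id
  | cons a l ih => exact (hT a).comp ih

theorem tendsto_foldr_append_singleton [TopologicalSpace α] (hT : ∀ a, Continuous (T a))
    {a₀ : α} {x₀ : X} (hT₀ : ContinuousAt (T · x₀) a₀) (hfix : T a₀ x₀ = x₀) (l : List α) :
    Tendsto (fun a => (l ++ [a]).foldr T x₀) (𝓝 a₀) (𝓝 (l.foldr T x₀)) := by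
  simp only [List.foldr_append, List.foldr_cons, List.foldr_nil]
  refine ((continuous_foldr hT l).tendsto x₀).comp ?_
  simpa only [ContinuousAt, hfix] using hT₀

theorem exists_seq_eq_apply_succ [TopologicalSpace α] [IsCompletelyMetrizableSpace X]
    (hT : ∀ a, Continuous (T a)) {a₀ : α} {x₀ : X} (hT₀ : ContinuousAt (T · x₀) a₀)
    (hfix : T a₀ x₀ = x₀) {P : α → Prop} (hP : ∃ᶠ a in 𝓝 a₀, P a) :
    ∃ (a : ℕ → α) (y : ℕ → X), ∀ n, P (a n) ∧ y n = T (a n) (y (n + 1)) := by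
  let _ := upgradeIsCompletelyMetrizable X
  -- The factor appended after the choices `l` moves the composition along every suffix of `l`
  -- by less than `2⁻¹ ^ l.length`; this makes all partial compositions Cauchy.
  have hstep : ∀ l : List α, ∃ a, P a ∧ ∀ s ∈ l.tails,
      dist ((s ++ [a]).foldr T x₀) (s.foldr T x₀) < 2⁻¹ ^ l.length := by
    intro l
    have hnear : ∀ s ∈ l.tails, ∀ᶠ a in 𝓝 a₀,
        dist ((s ++ [a]).foldr T x₀) (s.foldr T x₀) < 2⁻¹ ^ l.length := fun s _ =>
      ((tendsto_foldr_append_singleton hT hT₀ hfix s).dist tendsto_const_nhds).eventually_lt_const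
        (by rw [dist_self]; positivity)
    exact (hP.and_eventually ((l.tails.finite_toSet.eventually_all).2 hnear)).exists
  choose c hcP hc using hstep
  let L : ℕ → List α := fun m => Nat.rec [] (fun _ l => l ++ [c l]) m
  let a : ℕ → α := fun n => c (L n)
  have hL : ∀ m, L m = (List.range m).map a := by
    intro m
    induction m with
    | zero => rfl
    | succ m ih => rw [List.range_succ, List.map_append, ← ih]; rfl
  let S : ℕ → ℕ → X := fun N k => ((List.range' N k).map a).foldr T x₀
  have hS : ∀ N k, dist (S N k) (S N (k + 1)) < 2⁻¹ ^ (N + k) := by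
    intro N k
    have hsuffix : (List.range' N k).map a ∈ (L (N + k)).tails := by
      have hsplit : List.range' 0 (N + k) = List.range' 0 N ++ List.range' N k := by
        simpa using (List.range'_append (s := 0) (m := N) (n := k) (step := 1)).symm
      rw [List.mem_tails, hL, List.range_eq_range', hsplit, List.map_append]
      exact List.suffix_append _ _
    have hlen : (L (N + k)).length = N + k := by simp [hL]
    have hcons : (List.range' N (k + 1)).map a = (List.range' N k).map a ++ [a (N + k)] := by
      simp [List.range'_concat]
    rw [dist_comm, ← hlen]
    simpa only [S, hcons] using hc _ _ hsuffix
  have hlim : ∀ N, ∃ y, Tendsto (S N) atTop (𝓝 y) := fun N =>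
    cauchySeq_tendsto_of_complete <| cauchySeq_of_le_geometric 2⁻¹ (2⁻¹ ^ N) (by norm_num)
      fun k => by rw [← pow_add]; exact (hS N k).le
  choose y hy using hlim
  refine ⟨a, y, fun n => ⟨hcP _, tendsto_nhds_unique ((hy n).comp (tendsto_add_atTop_nat 1)) ?_⟩⟩
  have hS_succ : ∀ k, S n (k + 1) = T (a n) (S (n + 1) k) := fun k => by
    simp [S, List.range'_succ]
  simpa only [Function.comp_def, hS_succ] using ((hT (a n)).tendsto _).comp (hy (n + 1))

end InfiniteComposition

theorem exists_seq_eq_mul_pow_succ {M : Type*} [Monoid M] [TopologicalSpace M] [ContinuousMul M]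
    [IsCompletelyMetrizableSpace M] {P : M → Prop} (hP : ∃ᶠ g in 𝓝 1, P g) (e : M → ℕ) :
    ∃ h y : ℕ → M, ∀ n, P (h n) ∧ y n = h n * y (n + 1) ^ e (h n) :=
  exists_seq_eq_apply_succ (T := fun g z => g * z ^ e g) (a₀ := 1) (x₀ := 1)
    (fun _ => continuous_const.mul (continuous_pow _))
    (by simpa using continuous_id'.continuousAt) (by simp) hP

theorem map_pow_of_map_mul {M : Type*} [Monoid M] {φ : M → ℤ}
    (hφ : ∀ a b, φ (a * b) = φ a + φ b) (g : M) : ∀ n : ℕ, φ (g ^ n) = n * φ g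
  | 0 => by simpa using hφ 1 1
  | n + 1 => by rw [pow_succ, hφ, map_pow_of_map_mul hφ g n]; push_cast; ring

theorem continuous_of_eventually_eq_zero {G A : Type*} [Group G] [TopologicalSpace G]
    [IsTopologicalGroup G] [AddZeroClass A] [TopologicalSpace A] [DiscreteTopology A] {φ : G → A}
    (hφ : ∀ a b, φ (a * b) = φ a + φ b) (h0 : ∀ᶠ g in 𝓝 1, φ g = 0) : Continuous φ := by
  refine continuous_iff_continuousAt.2 fun x => ?_
  rw [ContinuousAt, ← map_mul_left_nhds_one x, tendsto_map'_iff, nhds_discrete A]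
  exact tendsto_pure.2 (h0.mono fun g hg => by simp [hφ, hg])

theorem natAbs_lt_natAbs_add_abs_add_two_mul {t : ℤ} (ht : t ≠ 0) (c : ℤ) :
    c.natAbs < (t + (|t| + 2) * c).natAbs := by
  zify
  rcases eq_or_ne c 0 with rfl | hc
  · simpa using ht
  have hc₁ := Int.one_le_abs hc
  have htriangle : |(|t| + 2) * c| ≤ |t + (|t| + 2) * c| + |t| := by
    simpa using abs_sub (t + (|t| + 2) * c) t
  rw [abs_mul, abs_of_pos (by positivity)] at htriangle
  nlinarith [mul_nonneg (abs_nonneg t) (sub_nonneg.2 hc₁)]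

/-- Dudley's theorem: every group homomorphism from a Polish group to the
integers (with the discrete topology) is continuous. -/
theorem dudley_continuity {G : Type*} [Group G] [TopologicalSpace G]
    [IsTopologicalGroup G] [PolishSpace G]
    (φ : G → ℤ) (hφ : ∀ a b : G, φ (a * b) = φ a + φ b) :
    Continuous φ := by
  by_contra hdisc
  have hfreq : ∃ᶠ g in 𝓝 1, φ g ≠ 0 :=
    not_eventually.1 (mt (continuous_of_eventually_eq_zero hφ) hdisc)
  obtain ⟨h, y, hy⟩ := exists_seq_eq_mul_pow_succ hfreq fun g => (φ g).natAbs + 2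
  obtain ⟨n, hn⟩ := WellFounded.not_rel_apply_succ (r := (· < ·)) fun n => (φ (y n)).natAbs
  apply hn
  rw [(hy n).2, hφ, map_pow_of_map_mul hφ]
  push_cast
  exact natAbs_lt_natAbs_add_abs_add_two_mul (hy n).1 _
end

section
/- (Specker's theorem) Every group homomorphism φ from the Baer–Specker group ℤ^ℕ to ℤ is a finite integral linear combination of the coordinate projections; equivalently, Hom(ℤ^ℕ, ℤ) is a free abelian group with basis the coordinate projections, i.e. Hom(∏_{i∈ℕ} ℤ, ℤ) ≅ ⊕_{i∈ℕ} ℤ. -/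
/-!
If `φ` vanishes on the unit vectors `eᵢ`, it vanishes on every `f` with `bⁱ ∣ fᵢ` (`|b| ≥ 2`):
`φ f` differs from `φ` of the truncation `∑_{i<n} fᵢ eᵢ`, which is `0`, by a multiple of `bⁿ`, for
every `n`. Since `2ⁱ` and `3ⁱ` are coprime, every sequence is a sum of such sequences for `b = 2`
and `b = 3`, so `φ` is determined by the values `cᵢ = φ eᵢ`.

If infinitely many `cᵢ` were nonzero, choose a sparse subsequence `m₀ < m₁ < ⋯` of them and put
`F = ∑ₖ sign(c_{mₖ}) 2^{mₖ} e_{mₖ}`. Then `φ F ≡ sₖ (mod 2^{mₖ})` for the strictly increasing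
partial sums `sₖ = ∑_{j<k} 2^{mⱼ} |c_{mⱼ}|`, and sparseness gives `2 sₖ < 2^{mₖ}`. So `φ F = sₖ`
for every `k` with `sₖ ≥ |φ F|`, which is absurd.
-/

open Finset

section

variable {ι : Type*} (φ : (ι → ℤ) →+ ℤ)

theorem AddMonoidHom.dvd_apply_of_forall_dvd {b : ℤ} {f : ι → ℤ} (h : ∀ i, b ∣ f i) :
    b ∣ φ f := by
  have hf : f = b • fun i => f i / b := funext fun i => (Int.mul_ediv_cancel' (h i)).symm
  rw [hf, map_zsmul, smul_eq_mul]
  exact dvd_mul_right _ _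

theorem AddMonoidHom.apply_single [DecidableEq ι] (i : ι) (x : ℤ) :
    φ (Pi.single i x) = x * φ (Pi.single i 1) := by
  rw [← smul_eq_mul, ← map_zsmul, ← Pi.single_smul', smul_eq_mul, mul_one]

end

theorem Finsupp.sum_mul_single_one {ι R : Type*} [DecidableEq ι] [Semiring R] (d : ι →₀ R) (i : ι) :
    (d.sum fun j a => a * (Pi.single i (1 : R) : ι → R) j) = d i := by
  simp [Finsupp.sum, Pi.single_apply]

theorem AddMonoidHom.pow_dvd_apply_sub_sum (φ : (ℕ → ℤ) →+ ℤ) {b : ℤ} {f : ℕ → ℤ}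
    (hf : ∀ i, b ^ i ∣ f i) (n : ℕ) :
    b ^ n ∣ φ f - ∑ i ∈ Finset.range n, f i * φ (Pi.single i 1) := by
  have hsum : ∑ i ∈ Finset.range n, f i * φ (Pi.single i 1) =
      φ (∑ i ∈ Finset.range n, Pi.single i (f i)) := by
    rw [map_sum]
    exact Finset.sum_congr rfl fun i _ => (φ.apply_single i (f i)).symm
  rw [hsum, ← map_sub]
  refine φ.dvd_apply_of_forall_dvd fun j => ?_
  rw [Pi.sub_apply, Finset.sum_apply, Finset.sum_pi_single]
  split_ifs with hj
  · simp
  · simpa using (pow_dvd_pow b (not_lt.mp (Finset.mem_range.not.mp hj))).trans (hf j)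

theorem Int.eq_zero_of_forall_pow_dvd {b x : ℤ} (hb : b.natAbs ≠ 1) (h : ∀ n : ℕ, b ^ n ∣ x) :
    x = 0 := by
  by_contra hx
  exact FiniteMultiplicity.not_iff_forall.mpr h (Int.finiteMultiplicity_iff.mpr ⟨hb, hx⟩)

theorem AddMonoidHom.apply_eq_zero_of_forall_pow_dvd (φ : (ℕ → ℤ) →+ ℤ)
    (hφ : ∀ i, φ (Pi.single i 1) = 0) {b : ℤ} (hb : b.natAbs ≠ 1) {f : ℕ → ℤ}
    (hf : ∀ i, b ^ i ∣ f i) : φ f = 0 :=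
  Int.eq_zero_of_forall_pow_dvd hb fun n => by simpa [hφ] using φ.pow_dvd_apply_sub_sum hf n

theorem exists_eq_two_pow_mul_add_three_pow_mul (x : ℤ) (i : ℕ) :
    ∃ a b : ℤ, x = 2 ^ i * a + 3 ^ i * b := by
  obtain ⟨u, v, huv⟩ : IsCoprime ((2 : ℤ) ^ i) (3 ^ i) :=
    IsCoprime.pow (Int.isCoprime_iff_gcd_eq_one.mpr rfl)
  exact ⟨u * x, v * x, by linear_combination -x * huv⟩

theorem AddMonoidHom.ext_pi_nat_int {φ ψ : (ℕ → ℤ) →+ ℤ}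
    (h : ∀ i, φ (Pi.single i 1) = ψ (Pi.single i 1)) : φ = ψ := by
  rw [← sub_eq_zero]
  refine AddMonoidHom.ext fun f => ?_
  have hsingle : ∀ i, (φ - ψ) (Pi.single i 1) = 0 := by simp [h]
  choose a b hab using fun i => exists_eq_two_pow_mul_add_three_pow_mul (f i) i
  rw [show f = (fun i => 2 ^ i * a i) + fun i => 3 ^ i * b i from funext hab, map_add,
    (φ - ψ).apply_eq_zero_of_forall_pow_dvd hsingle (b := 2) (by decide) fun i => dvd_mul_right _ _,
    (φ - ψ).apply_eq_zero_of_forall_pow_dvd hsingle (b := 3) (by decide) fun i => dvd_mul_right _ _]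
  rfl

namespace Specker

theorem eq_of_dvd_sub {x s M : ℤ} (hM : 2 * s < M) (hdvd : M ∣ x - s) (hx : |x| ≤ s) :
    x = s := by
  have hx' := abs_le.mp hx
  have hlt : |x - s| < M := abs_sub_lt_iff.mpr ⟨by linarith [abs_nonneg x], by linarith⟩
  exact sub_eq_zero.mp (Int.eq_zero_of_abs_lt_dvd hdvd hlt)

theorem exists_strictMono_sparse (c : ℕ → ℤ) (hc : {i | c i ≠ 0}.Infinite) :
    ∃ m : ℕ → ℕ, StrictMono m ∧ (∀ k, c (m k) ≠ 0) ∧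
      ∀ k, 2 * ∑ i ∈ range (m k + 1), 2 ^ i * |c i| < m (k + 1) := by
  choose next hnext_ne hnext_gt using fun n : ℕ =>
    hc.exists_gt (n + (2 * ∑ i ∈ range (n + 1), 2 ^ i * |c i|).toNat)
  have hstep : ∀ k, next^[k + 1 + 1] 0 = next (next^[k + 1] 0) := fun k =>
    Function.iterate_succ_apply' _ _ _
  refine ⟨fun k => next^[k + 1] 0, strictMono_nat_of_lt_succ fun k => ?_, fun k => ?_, fun k => ?_⟩
  · show next^[k + 1] 0 < next^[k + 1 + 1] 0
    rw [hstep]; have := hnext_gt (next^[k + 1] 0); omega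
  · show c (next^[k + 1] 0) ≠ 0
    rw [Function.iterate_succ_apply']; exact hnext_ne _
  · show 2 * ∑ i ∈ range (next^[k + 1] 0 + 1), 2 ^ i * |c i| < ((next^[k + 1 + 1] 0 : ℕ) : ℤ)
    rw [hstep]; have := hnext_gt (next^[k + 1] 0); omega

variable (c : ℕ → ℤ) (m : ℕ → ℕ)

open Classical in
noncomputable def signedPowSeq (i : ℕ) : ℤ := if i ∈ Set.range m then 2 ^ i * (c i).sign else 0

noncomputable def partialSum (n : ℕ) : ℤ :=
  ∑ i ∈ range n, (Set.range m).indicator (fun i => 2 ^ i * |c i|) i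

theorem pow_dvd_signedPowSeq (i : ℕ) : 2 ^ i ∣ signedPowSeq c m i := by
  unfold signedPowSeq
  split_ifs
  exacts [dvd_mul_right _ _, dvd_zero _]

theorem signedPowSeq_mul (i : ℕ) :
    signedPowSeq c m i * c i = (Set.range m).indicator (fun i => 2 ^ i * |c i|) i := by
  unfold signedPowSeq
  split_ifs with h
  · rw [Set.indicator_of_mem h, mul_assoc, Int.sign_mul_self_eq_abs]
  · rw [Set.indicator_of_notMem h, zero_mul]

theorem pow_dvd_apply_sub_partialSum (φ : (ℕ → ℤ) →+ ℤ) (n : ℕ) :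
    2 ^ n ∣ φ (signedPowSeq (fun i => φ (Pi.single i 1)) m) -
      partialSum (fun i => φ (Pi.single i 1)) m n := by
  simpa only [partialSum, signedPowSeq_mul] using
    φ.pow_dvd_apply_sub_sum (pow_dvd_signedPowSeq (fun i => φ (Pi.single i 1)) m) n

variable {c m}

theorem partialSum_nonneg (n : ℕ) : 0 ≤ partialSum c m n :=
  Finset.sum_nonneg fun _ _ => Set.indicator_nonneg (fun _ _ => by positivity) _

theorem partialSum_apply_add_one (k : ℕ) :
    partialSum c m (m k + 1) = partialSum c m (m k) + 2 ^ m k * |c (m k)| := by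
  rw [partialSum, Finset.sum_range_succ, Set.indicator_of_mem (Set.mem_range_self k)]
  rfl

theorem partialSum_apply_succ (hm : StrictMono m) (k : ℕ) :
    partialSum c m (m (k + 1)) = partialSum c m (m k + 1) := by
  unfold partialSum
  rw [← Finset.sum_range_add_sum_Ico _ (hm (Nat.lt_add_one k)), add_eq_left]
  refine Finset.sum_eq_zero fun i hi => Set.indicator_of_notMem ?_ _
  rintro ⟨j, rfl⟩
  rw [Finset.mem_Ico, Nat.succ_le_iff, hm.lt_iff_lt, hm.lt_iff_lt] at hi
  omega

theorem partialSum_lt_partialSum (hm : StrictMono m) (hc : ∀ k, c (m k) ≠ 0) (k : ℕ) :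
    partialSum c m (m k) < partialSum c m (m (k + 1)) := by
  have : 0 < 2 ^ m k * |c (m k)| := by have := abs_pos.mpr (hc k); positivity
  rw [partialSum_apply_succ hm, partialSum_apply_add_one]
  linarith

theorem le_partialSum (hm : StrictMono m) (hc : ∀ k, c (m k) ≠ 0) (k : ℕ) :
    (k : ℤ) ≤ partialSum c m (m k) := by
  induction k with
  | zero => exact partialSum_nonneg _
  | succ k ih => push_cast; linarith [partialSum_lt_partialSum hm hc k]

theorem two_mul_partialSum_lt (hm : StrictMono m)
    (hsparse : ∀ k, 2 * ∑ i ∈ range (m k + 1), 2 ^ i * |c i| < m (k + 1)) (k : ℕ) :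
    2 * partialSum c m (m (k + 1)) < 2 ^ m (k + 1) := by
  have hle : partialSum c m (m k + 1) ≤ ∑ i ∈ range (m k + 1), 2 ^ i * |c i| :=
    Finset.sum_le_sum fun i _ => Set.indicator_le_self' (fun _ _ => by positivity) i
  have hpow : (m (k + 1) : ℤ) < 2 ^ m (k + 1) := by exact_mod_cast Nat.lt_two_pow_self
  rw [partialSum_apply_succ hm]
  linarith [hsparse k]

end Specker

open Specker in
theorem AddMonoidHom.finite_support_apply_single (φ : (ℕ → ℤ) →+ ℤ) :
    (Function.support fun i => φ (Pi.single i 1)).Finite := by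
  set c : ℕ → ℤ := fun i => φ (Pi.single i 1)
  by_contra hinf
  obtain ⟨m, hm, hc, hsparse⟩ := exists_strictMono_sparse c hinf
  set x := φ (signedPowSeq c m)
  have hx : ∀ k : ℕ, |x| ≤ k → x = partialSum c m (m (k + 1)) := fun k hk =>
    eq_of_dvd_sub (two_mul_partialSum_lt hm hsparse k) (pow_dvd_apply_sub_partialSum m φ _)
      (hk.trans (by have := le_partialSum hm hc (k + 1); push_cast at this; linarith))
  have h₁ := hx x.natAbs (Int.natCast_natAbs x).ge
  have h₂ := hx (x.natAbs + 1) (by push_cast; linarith [Int.natCast_natAbs x])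
  exact (partialSum_lt_partialSum hm hc _).ne (h₁.symm.trans h₂)

/-- Specker's theorem: every homomorphism from the Baer–Specker group `ℤ^ℕ` to `ℤ`
is a unique finite integral linear combination of the coordinate projections;
hence `Hom(ℤ^ℕ, ℤ)` is free abelian with basis the coordinate projections. -/
theorem specker (φ : (ℕ → ℤ) →+ ℤ) :
    ∃! c : ℕ →₀ ℤ, ∀ f : ℕ → ℤ, φ f = c.sum fun i a => a * f i := by
  set c := Finsupp.ofSupportFinite _ φ.finite_support_apply_single
  let ψ : (ℕ → ℤ) →+ ℤ := c.sum fun i a => a • Pi.evalAddMonoidHom (fun _ => ℤ) i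
  have hψ : ∀ f, ψ f = c.sum fun i a => a * f i := by simp [ψ, Finsupp.sum]
  have hφψ : φ = ψ := AddMonoidHom.ext_pi_nat_int fun i => by
    rw [hψ, Finsupp.sum_mul_single_one, Finsupp.ofSupportFinite_coe]
  refine ⟨c, fun f => hφψ ▸ hψ f, fun d hd => Finsupp.ext fun i => ?_⟩
  rw [← Finsupp.sum_mul_single_one d i, ← hd, Finsupp.ofSupportFinite_coe]
end

section
/- Every homomorphism from the Baer–Specker group ℤ^ℕ to ℤ that vanishes on the direct sum ⊕_{i∈ℕ} ℤ (the sequences of finite support) is identically zero. -/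
/-!
Write `a n = 2 ^ n * u n + 3 ^ n * v n`, possible termwise since `2 ^ n` and `3 ^ n` are coprime.
For `m` not a unit and `b n = m ^ n * a n`, cutting `b` at index `N` gives `b = head + m ^ N • tail`
with `head` finitely supported, so `m ^ N ∣ φ b` for every `N` and hence `φ b = 0`.
-/

theorem exists_pow_mul_add_pow_mul {p q : ℤ} (hpq : IsCoprime p q) (a : ℕ → ℤ) :
    ∃ u v : ℕ → ℤ, a = fun n => p ^ n * u n + q ^ n * v n := by
  have (n : ℕ) : ∃ u v : ℤ, a n = p ^ n * u + q ^ n * v := by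
    obtain ⟨x, y, hxy⟩ := hpq.pow (m := n) (n := n)
    exact ⟨x * a n, y * a n, by linear_combination (a n) * hxy.symm⟩
  choose u v huv using this
  exact ⟨u, v, funext huv⟩

theorem pow_dvd_map_pow_mul (φ : (ℕ → ℤ) →+ ℤ)
    (h : ∀ f : ℕ → ℤ, (Function.support f).Finite → φ f = 0) (m : ℤ) (a : ℕ → ℤ) (N : ℕ) :
    m ^ N ∣ φ (fun n => m ^ n * a n) := by
  set tail : ℕ → ℤ := fun n => if N ≤ n then m ^ (n - N) * a n else 0
  have hsplit : (fun n => m ^ n * a n) = (Set.Iio N).indicator (fun n => m ^ n * a n)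
      + m ^ N • tail := by
    funext n
    by_cases hn : N ≤ n
    · simp [tail, hn, ← mul_assoc, ← pow_add, Nat.add_sub_cancel' hn]
    · simp [tail, hn, not_le.mp hn]
  have hhead : φ ((Set.Iio N).indicator fun n => m ^ n * a n) = 0 :=
    h _ ((Set.finite_Iio N).subset Set.support_indicator_subset)
  rw [hsplit, map_add, hhead, zero_add, map_zsmul, smul_eq_mul]
  exact dvd_mul_right _ _

theorem map_pow_mul_eq_zero (φ : (ℕ → ℤ) →+ ℤ)
    (h : ∀ f : ℕ → ℤ, (Function.support f).Finite → φ f = 0)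
    {m : ℤ} (hm : m.natAbs ≠ 1) (a : ℕ → ℤ) :
    φ (fun n => m ^ n * a n) = 0 := by
  by_contra hne
  obtain ⟨N, hN⟩ := Int.finiteMultiplicity_iff.mpr ⟨hm, hne⟩
  exact hN (pow_dvd_map_pow_mul φ h m a (N + 1))

/-- A homomorphism from the Baer–Specker group `ℤ^ℕ` to `ℤ` that vanishes on all
finitely supported sequences is identically zero. -/
theorem specker_vanishing (φ : (ℕ → ℤ) →+ ℤ)
    (h : ∀ f : ℕ → ℤ, (Function.support f).Finite → φ f = 0) :
    φ = 0 := by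
  ext a
  obtain ⟨u, v, rfl⟩ := exists_pow_mul_add_pow_mul (p := 2) (q := 3)
    (Int.isCoprime_iff_gcd_eq_one.mpr rfl) a
  change φ ((fun n => 2 ^ n * u n) + fun n => 3 ^ n * v n) = 0
  rw [map_add, map_pow_mul_eq_zero φ h (by decide) u, map_pow_mul_eq_zero φ h (by decide) v,
    add_zero]
end

section
/- Let G be a Polish group, N a closed normal subgroup that contains a dense perfect subgroup, and suppose there is a homomorphism κ: A → G from an abelian group A such that the composition with the projection π: G → G/N is an isomorphism A → G/N. Then restriction along κ induces a group isomorphism Hom(G, ℤ) ≅ Hom(A, ℤ), φ ↦ φ ∘ κ. -/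
/-!
Every homomorphism `φ : G → ℤ` kills the perfect group `P`, hence its closure `N`, once we know
that `ker φ` is closed; then `φ` factors through `G ⧸ N ≅ A`. Closedness of the kernel is
Dudley's argument: if `φ = c ≠ 0` at points arbitrarily close to `1`, choose such points `h m`
fast enough that the nested words `(h m * (h (m+1) * (⋯) ^ p) ^ p) ^ p` converge in a complete
metric to elements `w m` with `w m = (h m * w (m + 1)) ^ p`. Then `φ (w m) = p * (c + φ (w (m+1)))`,
which has no integer solution for `p ≥ |c| + 2`.
-/

open Filter Topology Finset.HasAntidiagonal

theorem not_forall_eq_mul_add {c p : ℤ} (hc : c ≠ 0) (hp : |c| + 2 ≤ p) (a : ℕ → ℤ) :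
    ¬ ∀ m, a m = p * (c + a (m + 1)) := by
  intro ha
  -- `b m ≡ c [ZMOD p]` never vanishes, and `p * |b (m + 1)| ≤ |b m| + |c|` makes `|b|` decrease.
  set b : ℕ → ℤ := fun m => c + a (m + 1)
  have hb : ∀ m, b m = c + p * b (m + 1) := fun m => by simp only [b, ← ha]
  have hb_ne : ∀ m, b m ≠ 0 := by
    intro m h0
    have hdvd : p ∣ c := ⟨-b (m + 1), by linarith [hb m]⟩
    exact hc (Int.eq_zero_of_abs_lt_dvd hdvd (by linarith))
  refine not_strictAnti_of_wellFoundedLT (fun m => (b m).natAbs) (strictAnti_nat_of_succ_lt ?_)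
  intro m
  have h1 : 1 ≤ |b (m + 1)| := Int.one_le_abs (hb_ne (m + 1))
  have h2 : p * |b (m + 1)| ≤ |b m| + |c| := by
    rw [← abs_of_nonneg (by linarith [abs_nonneg c] : 0 ≤ p), ← abs_mul]
    calc |p * b (m + 1)| = |b m - c| := by rw [hb m]; ring_nf
      _ ≤ |b m| + |c| := abs_sub _ _
  have : |b (m + 1)| < |b m| := by
    nlinarith [mul_le_mul_of_nonneg_left h1 (by linarith [abs_nonneg c] : (0 : ℤ) ≤ p - 1)]
  simpa only [Int.abs_eq_natAbs, Nat.cast_lt] using this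

theorem exists_seq_forall_of_exists {α : Type*} [Nonempty α] (Q : ℕ → (ℕ → α) → α → Prop)
    (hQ : ∀ n g g' x, (∀ i < n, g i = g' i) → Q n g x → Q n g' x)
    (hex : ∀ n g, ∃ x, Q n g x) : ∃ h : ℕ → α, ∀ n, Q n h (h n) := by
  choose next hnext using hex
  let prefixes : ℕ → ℕ → α := fun n =>
    Nat.rec (fun _ => Classical.arbitrary α) (fun n g => Function.update g n (next n g)) n
  have hprefix : ∀ n i, i < n → prefixes n i = prefixes (i + 1) i := by
    intro n
    induction n with
    | zero => intro i hi; omega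
    | succ n ih =>
      intro i hi
      rcases Nat.lt_succ_iff_lt_or_eq.1 hi with hi | rfl
      · exact (Function.update_of_ne hi.ne _ _).trans (ih i hi)
      · rfl
  refine ⟨fun i => prefixes (i + 1) i, fun n => ?_⟩
  refine hQ n (prefixes n) _ _ (hprefix n) ?_
  show Q n (prefixes n) (Function.update (prefixes n) n (next n (prefixes n)) n)
  rw [Function.update_self]
  exact hnext n (prefixes n)

section DudleyWord

variable {G : Type*} [Group G]

def dudleyWord (p : ℕ) (h : ℕ → G) : ℕ → ℕ → G
  | 0, _ => 1
  | k + 1, m => (h m * dudleyWord p h k (m + 1)) ^ p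

variable {p : ℕ}

theorem dudleyWord_succ (h : ℕ → G) (k m : ℕ) :
    dudleyWord p h (k + 1) m = (h m * dudleyWord p h k (m + 1)) ^ p := rfl

theorem dudleyWord_congr {h h' : ℕ → G} {k m : ℕ} (hh : ∀ i < m + k, h i = h' i) :
    dudleyWord p h k m = dudleyWord p h' k m := by
  induction k generalizing m with
  | zero => rfl
  | succ k ih =>
    rw [dudleyWord_succ, dudleyWord_succ, hh m (by omega),
      ih fun i hi => hh i (by omega)]

theorem dudleyWord_succ_of_eq_one {h : ℕ → G} {k m : ℕ} (hk : h (m + k) = 1) :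
    dudleyWord p h (k + 1) m = dudleyWord p h k m := by
  induction k generalizing m with
  | zero => rw [add_zero] at hk; simp [dudleyWord, hk]
  | succ k ih =>
    rw [dudleyWord_succ, ih (by rwa [Nat.add_right_comm]), dudleyWord_succ]

theorem continuous_dudleyWord [TopologicalSpace G] [IsTopologicalGroup G] (p k m : ℕ) :
    Continuous fun h : ℕ → G => dudleyWord p h k m := by
  induction k generalizing m with
  | zero => exact continuous_const
  | succ k ih => exact ((continuous_apply m).mul (ih (m + 1))).pow p

end DudleyWord

theorem exists_seq_mem_dist_dudleyWord_le {G : Type*} [Group G] [MetricSpace G]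
    [IsTopologicalGroup G] {S : Set G} (hS : ∃ᶠ x in 𝓝 1, x ∈ S) (p : ℕ) :
    ∃ h : ℕ → G, (∀ n, h n ∈ S) ∧
      ∀ m k, dist (dudleyWord p h (k + 1) m) (dudleyWord p h k m) ≤ (1 / 2 : ℝ) ^ (m + k) := by
  have step : ∀ (n : ℕ) (g : ℕ → G), ∃ x, x ∈ S ∧ ∀ mk ∈ antidiagonal n,
      dist (dudleyWord p (Function.update g n x) (mk.2 + 1) mk.1) (dudleyWord p g mk.2 mk.1)
        ≤ (1 / 2 : ℝ) ^ n := by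
    intro n g
    -- for `x = 1` the new words coincide with the old ones, so `x` near `1` keeps them close
    refine (hS.and_eventually ((antidiagonal n).eventually_all.2 ?_)).exists
    rintro ⟨m, k⟩ hmk
    rw [mem_antidiagonal] at hmk
    have hone : dudleyWord p (Function.update g n 1) (k + 1) m = dudleyWord p g k m := by
      rw [dudleyWord_succ_of_eq_one (by rw [hmk, Function.update_self])]
      exact dudleyWord_congr fun i hi => Function.update_of_ne (by omega) _ _
    have hlim : Tendsto (fun x => dudleyWord p (Function.update g n x) (k + 1) m) (𝓝 1)
        (𝓝 (dudleyWord p g k m)) :=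
      hone ▸ ((continuous_dudleyWord p (k + 1) m).comp
        (continuous_const.update n continuous_id)).tendsto 1
    exact hlim (Metric.closedBall_mem_nhds _ (by positivity))
  refine (exists_seq_forall_of_exists _ ?_ step).imp fun h hh =>
    ⟨fun n => (hh n).1, fun m k => ?_⟩
  · rintro n g g' x hgg' ⟨hx, hdist⟩
    refine ⟨hx, fun mk hmk => ?_⟩
    have hle := hdist mk hmk
    rw [mem_antidiagonal] at hmk
    rwa [dudleyWord_congr (h := g) (h' := g') fun i hi => hgg' i (by omega),
      dudleyWord_congr (h := Function.update g n x) (h' := Function.update g' n x) fun i hi => ?_]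
      at hle
    rcases eq_or_ne i n with rfl | hin
    · simp only [Function.update_self]
    · simp only [Function.update_of_ne hin, hgg' i (by omega)]
  · simpa only [Function.update_eq_self] using (hh (m + k)).2 (m, k) (mem_antidiagonal.2 rfl)

theorem exists_seq_mem_eq_mul_pow {G : Type*} [Group G] [TopologicalSpace G]
    [IsTopologicalGroup G] [TopologicalSpace.IsCompletelyMetrizableSpace G] {S : Set G}
    (hS : ∃ᶠ x in 𝓝 1, x ∈ S) (p : ℕ) :
    ∃ h w : ℕ → G, (∀ n, h n ∈ S) ∧ ∀ m, w m = (h m * w (m + 1)) ^ p := by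
  let := TopologicalSpace.upgradeIsCompletelyMetrizable G
  obtain ⟨h, hS, hdist⟩ := exists_seq_mem_dist_dudleyWord_le hS p
  have hcauchy (m : ℕ) : CauchySeq fun k => dudleyWord p h k m := by
    refine cauchySeq_of_le_geometric (1 / 2) ((1 / 2) ^ m) (by norm_num) fun k => ?_
    rw [dist_comm, ← pow_add]
    exact hdist m k
  choose w hw using fun m => cauchySeq_tendsto_of_complete (hcauchy m)
  refine ⟨h, w, hS, fun m => tendsto_nhds_unique (hw m) ?_⟩
  rw [← tendsto_add_atTop_iff_nat 1]
  exact ((hw (m + 1)).const_mul (h m)).pow p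

theorem MonoidHom.eventually_nhds_one_ne {G : Type*} [Group G] [TopologicalSpace G]
    [IsTopologicalGroup G] [TopologicalSpace.IsCompletelyMetrizableSpace G]
    (f : G →* Multiplicative ℤ) {c : Multiplicative ℤ} (hc : c ≠ 1) :
    ∀ᶠ x in 𝓝 (1 : G), f x ≠ c := by
  by_contra hfreq
  simp only [not_eventually, not_not] at hfreq
  obtain ⟨h, w, hh, hw⟩ := exists_seq_mem_eq_mul_pow hfreq (c.toAdd.natAbs + 2)
  refine not_forall_eq_mul_add (c := c.toAdd) (p := c.toAdd.natAbs + 2)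
    (toAdd_eq_zero.not.2 hc) (by simp) (fun m => (f (w m)).toAdd) fun m => ?_
  rw [hw m, map_pow, map_mul, hh m]
  simp

theorem MonoidHom.isClosed_ker_of_isCompletelyMetrizableSpace {G : Type*} [Group G]
    [TopologicalSpace G] [IsTopologicalGroup G] [TopologicalSpace.IsCompletelyMetrizableSpace G]
    (f : G →* Multiplicative ℤ) : IsClosed (f.ker : Set G) := by
  refine isOpen_compl_iff.1 (isOpen_iff_mem_nhds.2 fun g hg => ?_)
  rw [← map_mul_left_nhds_one, mem_map]
  filter_upwards [f.eventually_nhds_one_ne (inv_ne_one.2 hg)] with x hx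
  simpa [mul_eq_one_iff_inv_eq] using hx.symm

theorem MonoidHom.le_ker_of_commutator_eq_top {G M : Type*} [Group G] [CommGroup M]
    (f : G →* M) {P : Subgroup G} (hP : commutator P = ⊤) : P ≤ f.ker := fun x hx => by
  have hmem : (⟨x, hx⟩ : P) ∈ commutator P := hP ▸ Subgroup.mem_top _
  simpa using Abelianization.commutator_subset_ker (f.comp P.subtype) hmem

theorem exists_mulEquiv_comp_eq {G A M : Type*} [Group G] [Group A] [CommGroup M]
    {N : Subgroup G} [N.Normal] (κ : A →* G)
    (hκ : Function.Bijective ((QuotientGroup.mk' N).comp κ)) (hN : ∀ f : G →* M, N ≤ f.ker) :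
    ∃ e : (G →* M) ≃* (A →* M), ∀ f, e f = f.comp κ := by
  have hker : ⊤ = (MonoidHom.domRestrictHom N M).ker :=
    (eq_top_iff.2 fun f _ => MonoidHom.domRestrict_eq_one_iff.2 (hN f)).symm
  refine ⟨Subgroup.topEquiv.symm.trans <| (MulEquiv.subgroupCongr hker).trans <|
    (MonoidHom.domRestrictHomKerEquiv M N).trans
      (MulEquiv.ofBijective _ hκ).symm.monoidHomCongrLeft, fun f => rfl⟩

theorem hom_iso_of_decomposition_general {G A : Type*} [Group G] [TopologicalSpace G]
    [IsTopologicalGroup G] [PolishSpace G] [CommGroup A]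
    (N P : Subgroup G) (hN : N.Normal)
    (hperf : commutator ↥P = ⊤)
    (hdense : closure (P : Set G) = (N : Set G))
    (κ : A →* G) (hiso : Function.Bijective ((QuotientGroup.mk' N).comp κ)) :
    ∃ e : (G →* Multiplicative ℤ) ≃* (A →* Multiplicative ℤ),
      ∀ φ : G →* Multiplicative ℤ, e φ = φ.comp κ := by
  refine exists_mulEquiv_comp_eq κ hiso fun φ => ?_
  rw [← SetLike.coe_subset_coe, ← hdense]
  exact (φ.isClosed_ker_of_isCompletelyMetrizableSpace).closure_subset_iff.2
    (φ.le_ker_of_commutator_eq_top hperf)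

/-- Let `G` be a Polish group, `N` a closed normal subgroup containing a dense
perfect subgroup `P` (dense in `N`), and `κ : A → G` a homomorphism from an
abelian group `A` such that `π ∘ κ : A → G/N` is an isomorphism.  Then
restriction along `κ` induces an isomorphism `Hom(G, ℤ) ≅ Hom(A, ℤ)`. -/
theorem hom_iso_of_decomposition {G A : Type*} [Group G] [TopologicalSpace G]
    [IsTopologicalGroup G] [PolishSpace G] [CommGroup A]
    (N P : Subgroup G) (hN : N.Normal) (hclosed : IsClosed (N : Set G))
    (hPN : P ≤ N) (hperf : commutator ↥P = ⊤)
    (hdense : closure (P : Set G) = (N : Set G))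
    (κ : A →* G) (hiso : Function.Bijective ((QuotientGroup.mk' N).comp κ)) :
    ∃ e : (G →* Multiplicative ℤ) ≃* (A →* Multiplicative ℤ),
      ∀ φ : G →* Multiplicative ℤ, e φ = φ.comp κ :=
  hom_iso_of_decomposition_general N P hN hperf hdense κ hiso
end
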